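/- Let ℓ ∈ ℝⁿ be a length vector and suppose n ≤ d. Then the natural map φ: M_{d−1}(ℓ) → M_d(ℓ) induced by the inclusion ℝ^{d−1} ≅ ℝ^{d−1}×{0} ⊂ ℝ^d is surjective. -/

import Mathlib

noncomputable section

/-- The property of being a rotation matrix (an element of `SO(d)`). -/
def IsSOMat {d : ℕ} (A : Matrix (Fin d) (Fin d) ℝ) : Prop :=
  A * A.transpose = 1 ∧ A.det = 1

/-- A length vector: all entries positive. -/
def IsLengthVector {n : ℕ} (ℓ : Fin n → ℝ) : Prop := ∀ i, 0 < ℓ i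

/-- A subset `J ⊆ {1,…,n}` is `ℓ`-short if `∑_{j∈J} ℓ_j < ∑_{i∉J} ℓ_i`. -/
def IsShort {n : ℕ} (ℓ : Fin n → ℝ) (J : Finset (Fin n)) : Prop :=
  ∑ j ∈ J, ℓ j < ∑ j ∈ Jᶜ, ℓ j

/-- A subset is `ℓ`-long if its complement is `ℓ`-short. -/
def IsLong {n : ℕ} (ℓ : Fin n → ℝ) (J : Finset (Fin n)) : Prop :=
  IsShort ℓ Jᶜ

/-- `ℓ` is generic: no subset is `ℓ`-median. -/
def IsGeneric {n : ℕ} (ℓ : Fin n → ℝ) : Prop :=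
  ∀ J : Finset (Fin n), ∑ j ∈ J, ℓ j ≠ ∑ j ∈ Jᶜ, ℓ j

/-- `a_k(ℓ)`, computed with respect to a dominating index `m`: the number of
`ℓ`-short subsets `J` containing `m` with `|J| = k + 1`. -/
def aCount {n : ℕ} (ℓ : Fin n → ℝ) (m : Fin n) (k : ℕ) : ℕ :=
  Set.ncard {J : Finset (Fin n) | m ∈ J ∧ J.card = k + 1 ∧ IsShort ℓ J}

/-- The space of configurations whose quotient by the diagonal `SO(d)`-action is
the moduli space `M_d(ℓ)`: `n`-tuples of unit vectors in `ℝ^d` with `∑ ℓ_i z_i = 0`,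
topologized as a subspace of the product. -/
abbrev LinkCfg (d n : ℕ) (ℓ : Fin n → ℝ) : Type :=
  {z : Fin n → EuclideanSpace ℝ (Fin d) // (∀ i, ‖z i‖ = 1) ∧ ∑ i, ℓ i • z i = 0}

/-- The orbit relation of the diagonal `SO(d)`-action on configurations. -/
def soRel (d n : ℕ) (ℓ : Fin n → ℝ) (z w : LinkCfg d n ℓ) : Prop :=
  ∃ A : Matrix (Fin d) (Fin d) ℝ, IsSOMat A ∧
    ∀ i, (w : Fin n → EuclideanSpace ℝ (Fin d)) i =
      Matrix.toEuclideanLin A ((z : Fin n → EuclideanSpace ℝ (Fin d)) i)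

/-- The moduli space `M_d(ℓ) = {z ∈ (S^{d-1})^n : ∑ ℓ_i z_i = 0}/SO(d)`,
with the quotient topology. -/
abbrev ModuliSpace (d n : ℕ) (ℓ : Fin n → ℝ) : Type := Quot (soRel d n ℓ)

end

noncomputable section

/-- The isometric inclusion `ℝ^a → ℝ^b` (for `a ≤ b`) appending zero coordinates,
realizing `ℝ^a ≅ ℝ^a × {0} ⊆ ℝ^b`. -/
def includeCoord (a b : ℕ) (x : EuclideanSpace ℝ (Fin a)) : EuclideanSpace ℝ (Fin b) :=
  WithLp.toLp 2 (fun j : Fin b => if h : (j : ℕ) < a then x ⟨j, h⟩ else 0)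

end

/-!
The `n` vectors of a configuration satisfy the nontrivial relation `∑ ℓ i • z i = 0`, so they
span a subspace of dimension `< n ≤ d` and some unit vector `u` is orthogonal to all of them.
The reflection exchanging `u` and the last basis vector `e`, composed if necessary with the
reflection in `uᗮ` to make it orientation preserving, is a rotation sending `u` to `± e`; it
moves the configuration into `ℝ^(d-1) × {0}` without changing its `SO(d)`-orbit.
-/

open Module Submodule
open scoped RealInnerProductSpace

theorem finrank_span_range_lt_card_of_sum_smul_eq_zero {K V ι : Type*} [Field K]
    [AddCommGroup V] [Module K V] [Fintype ι] {v : ι → V} {c : ι → K}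
    (hc : ∑ i, c i • v i = 0) {i : ι} (hi : c i ≠ 0) :
    finrank K (span K (Set.range v)) < Fintype.card ι := by
  refine lt_of_le_of_ne (finrank_range_le_card v) fun h => hi ?_
  have hli : LinearIndependent K v := linearIndependent_iff_card_eq_finrank_span.mpr h.symm
  exact Fintype.linearIndependent_iff.mp hli c hc i

section Rotation

variable {E : Type*} [NormedAddCommGroup E] [InnerProductSpace ℝ E] [FiniteDimensional ℝ E]

theorem Submodule.exists_norm_eq_one_mem_orthogonal (V : Submodule ℝ E)
    (hV : finrank ℝ V < finrank ℝ E) : ∃ u ∈ Vᗮ, ‖u‖ = 1 := by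
  have hV_perp : Vᗮ ≠ ⊥ := by
    rw [Ne, orthogonal_eq_bot_iff]
    intro h
    rw [h, finrank_top] at hV
    exact hV.false
  obtain ⟨u, huV, hu⟩ := Submodule.exists_mem_ne_zero_of_ne_bot hV_perp
  exact ⟨‖u‖⁻¹ • u, Vᗮ.smul_mem _ huV, norm_smul_inv_norm hu⟩

theorem exists_det_eq_one_apply_eq_or_apply_eq_neg {u v : E} (huv : ‖u‖ = ‖v‖) (hu : u ≠ 0) :
    ∃ F : E ≃ₗᵢ[ℝ] E, LinearMap.det F.toLinearMap = 1 ∧ (F u = v ∨ F u = -v) := by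
  set g := reflection (ℝ ∙ (u - v))ᗮ
  have hgu : g u = v := reflection_sub huv
  rcases neg_one_pow_eq_or ℝ (finrank ℝ (ℝ ∙ (u - v))ᗮᗮ) with hg | hg
  · exact ⟨g, by rw [det_reflection, hg], Or.inl hgu⟩
  · set ρ := reflection (ℝ ∙ u)ᗮ
    have hρ : LinearMap.det ρ.toLinearMap = -1 := by
      rw [det_reflection, orthogonal_orthogonal, finrank_span_singleton hu, pow_one]
    refine ⟨ρ.trans g, ?_, Or.inr ?_⟩
    · change LinearMap.det (g.toLinearMap ∘ₗ ρ.toLinearMap) = 1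
      rw [LinearMap.det_comp, det_reflection, hg, hρ]
      norm_num
    · rw [LinearIsometryEquiv.trans_apply, reflection_orthogonalComplement_singleton_eq_neg,
        map_neg, hgu]

theorem exists_det_eq_one_inner_apply_eq_zero {ι : Type*} (w : ι → E)
    (hw : finrank ℝ (span ℝ (Set.range w)) < finrank ℝ E) {e : E} (he : ‖e‖ = 1) :
    ∃ F : E ≃ₗᵢ[ℝ] E, LinearMap.det F.toLinearMap = 1 ∧ ∀ i, ⟪F (w i), e⟫ = 0 := by
  obtain ⟨u, huw, hu⟩ := (span ℝ (Set.range w)).exists_norm_eq_one_mem_orthogonal hw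
  obtain ⟨F, hF, hFu⟩ := exists_det_eq_one_apply_eq_or_apply_eq_neg (hu.trans he.symm)
    (norm_ne_zero_iff.mp (hu ▸ one_ne_zero))
  have hwu : ∀ i, ⟪F (w i), F u⟫ = 0 := fun i => by
    rw [LinearIsometryEquiv.inner_map_map]
    exact (mem_orthogonal _ u).mp huw _ (subset_span ⟨i, rfl⟩)
  refine ⟨F, hF, fun i => ?_⟩
  rcases hFu with h | h
  · rw [← h, hwu]
  · rw [← neg_neg e, ← h, inner_neg_right, hwu, neg_zero]

end Rotation

theorem exists_isSOMat_toEuclideanLin_eq {d : ℕ}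
    (F : EuclideanSpace ℝ (Fin d) ≃ₗᵢ[ℝ] EuclideanSpace ℝ (Fin d))
    (hF : LinearMap.det F.toLinearMap = 1) :
    ∃ A : Matrix (Fin d) (Fin d) ℝ, IsSOMat A ∧ Matrix.toEuclideanLin A = F.toLinearMap := by
  set b := (EuclideanSpace.basisFun (Fin d) ℝ).toBasis
  refine ⟨LinearMap.toMatrix b b F.toLinearMap, ⟨?_, by rwa [LinearMap.det_toMatrix]⟩, ?_⟩
  · exact Matrix.mem_unitaryGroup_iff.mp (F.toMatrix_mem_unitaryGroup _ _)
  · exact Matrix.toLin_toMatrix b b _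

theorem norm_includeCoord {a b : ℕ} (hab : a ≤ b) (x : EuclideanSpace ℝ (Fin a)) :
    ‖includeCoord a b x‖ = ‖x‖ := by
  rw [EuclideanSpace.norm_eq, EuclideanSpace.norm_eq]
  congr 1
  refine (Fintype.sum_of_injective (Fin.castLE hab) (Fin.castLE_injective hab) _ _
    (fun j hj => ?_) fun i => by simp [includeCoord]).symm
  have hja : ¬ (j : ℕ) < a := fun h => hj ⟨⟨j, h⟩, rfl⟩
  simp [includeCoord, hja]

def includeCoordₗᵢ {a b : ℕ} (hab : a ≤ b) :
    EuclideanSpace ℝ (Fin a) →ₗᵢ[ℝ] EuclideanSpace ℝ (Fin b) where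
  toFun := includeCoord a b
  map_add' x y := by ext j; by_cases h : (j : ℕ) < a <;> simp [includeCoord, h]
  map_smul' c x := by ext j; by_cases h : (j : ℕ) < a <;> simp [includeCoord, h]
  norm_map' := norm_includeCoord hab

theorem exists_includeCoord_eq_of_apply_last_eq_zero {m : ℕ}
    {x : EuclideanSpace ℝ (Fin (m + 1))} (hx : x (Fin.last m) = 0) :
    ∃ y, includeCoord m (m + 1) y = x := by
  refine ⟨WithLp.toLp 2 fun k => x k.castSucc, ?_⟩
  ext j
  simp only [includeCoord]
  split_ifs with hj
  · rfl
  · rw [← hx, Fin.eq_last_of_not_lt hj]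

namespace LinkCfg

variable {n : ℕ} {ℓ : Fin n → ℝ}

noncomputable def map {a b : ℕ} (f : EuclideanSpace ℝ (Fin a) →ₗᵢ[ℝ] EuclideanSpace ℝ (Fin b))
    (z : LinkCfg a n ℓ) : LinkCfg b n ℓ :=
  ⟨fun i => f (z.1 i), fun i => (f.norm_map _).trans (z.2.1 i), by
    simp_rw [← f.map_smul, ← map_sum, z.2.2, map_zero]⟩

theorem exists_map_eq_of_forall_mem_range {a b : ℕ}
    (f : EuclideanSpace ℝ (Fin a) →ₗᵢ[ℝ] EuclideanSpace ℝ (Fin b)) (y : LinkCfg b n ℓ)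
    (hy : ∀ i, y.1 i ∈ Set.range f) : ∃ z : LinkCfg a n ℓ, map f z = y := by
  choose z hz using hy
  have hsum : ∑ i, ℓ i • z i = 0 := f.injective <| by
    simp_rw [map_sum, f.map_smul, hz, y.2.2, map_zero]
  refine ⟨⟨z, fun i => ?_, hsum⟩, Subtype.ext (funext hz)⟩
  rw [← f.norm_map, hz, y.2.1 i]

theorem soRel_map {d : ℕ} (F : EuclideanSpace ℝ (Fin d) ≃ₗᵢ[ℝ] EuclideanSpace ℝ (Fin d))
    (hF : LinearMap.det F.toLinearMap = 1) (w : LinkCfg d n ℓ) :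
    soRel d n ℓ w (map F.toLinearIsometry w) := by
  obtain ⟨A, hA, hAF⟩ := exists_isSOMat_toEuclideanLin_eq F hF
  exact ⟨A, hA, fun i => by rw [hAF]; rfl⟩

theorem finrank_span_range_lt (hℓ : IsLengthVector ℓ) {d : ℕ} (hnd : n ≤ d) (hd : 0 < d)
    (w : LinkCfg d n ℓ) :
    finrank ℝ (span ℝ (Set.range w.1)) < finrank ℝ (EuclideanSpace ℝ (Fin d)) := by
  rw [finrank_euclideanSpace_fin]
  rcases n.eq_zero_or_pos with rfl | hn
  · exact (finrank_range_le_card w.1).trans_lt (by simpa using hd)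
  · refine (finrank_span_range_lt_card_of_sum_smul_eq_zero w.2.2 (hℓ ⟨0, hn⟩).ne').trans_le ?_
    simpa using hnd

end LinkCfg

/-- Let `ℓ ∈ ℝⁿ` be a length vector with `n ≤ d`. Then the natural map
`φ : M_{d-1}(ℓ) → M_d(ℓ)` induced by the inclusion `ℝ^{d-1} ≅ ℝ^{d-1} × {0} ⊆ ℝ^d`
is surjective.  (The map `φ` is characterized by sending the class of a configuration
`z` in `ℝ^{d-1}` to the class of the coordinatewise-included configuration in `ℝ^d`.) -/
theorem natural_map_surjective (n d : ℕ) (ℓ : Fin n → ℝ)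
    (hℓ : IsLengthVector ℓ) (hnd : n ≤ d)
    (φ : ModuliSpace (d - 1) n ℓ → ModuliSpace d n ℓ)
    (hφ : ∀ (z : LinkCfg (d - 1) n ℓ) (w : LinkCfg d n ℓ),
      (∀ i, (w : Fin n → EuclideanSpace ℝ (Fin d)) i =
          includeCoord (d - 1) d ((z : Fin n → EuclideanSpace ℝ (Fin (d - 1))) i)) →
      φ (Quot.mk _ z) = Quot.mk _ w) :
    Function.Surjective φ := by
  rintro ⟨w⟩
  rcases d with _ | m
  · obtain rfl : n = 0 := Nat.le_zero.mp hnd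
    exact ⟨Quot.mk _ w, hφ w w fun i => i.elim0⟩
  obtain ⟨F, hF, hperp⟩ := exists_det_eq_one_inner_apply_eq_zero w.1
    (LinkCfg.finrank_span_range_lt hℓ hnd m.succ_pos w)
    (e := EuclideanSpace.single (Fin.last m) 1) (by simp)
  obtain ⟨z, hz⟩ := LinkCfg.exists_map_eq_of_forall_mem_range (includeCoordₗᵢ m.le_succ)
    (LinkCfg.map F.toLinearIsometry w) fun i =>
      exists_includeCoord_eq_of_apply_last_eq_zero (x := F (w.1 i))
        (by simpa [EuclideanSpace.inner_single_right] using hperp i)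
  refine ⟨Quot.mk _ z, (hφ z _ fun i => ?_).trans (Quot.sound (LinkCfg.soRel_map F hF w)).symm⟩
  rw [← hz]
  rfl
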